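/- Let G be a group with word metric, let (a_n) satisfy |a_{n+1}| ≥ n|a_n| with a_1 ≠ e, and suppose a_M, a_K ∈ B(g,R) with M < K and K ≥ 3. Then |a_{K-1}|/R ≤ 2/(K-2). -/

import Mathlib

open Set

noncomputable def wordLength {G : Type*} [Group G] (S : Set G) (g : G) : ℕ :=
  sInf {n | ∃ f : Fin n → G, (∀ i, f i ∈ S) ∧ (List.ofFn f).prod = g}

noncomputable def wordDist {G : Type*} [Group G] (S : Set G) (x y : G) : ℕ :=
  wordLength S (x⁻¹ * y)

def wordBall {G : Type*} [Group G] (S : Set G) (g : G) (n : ℕ) : Set G :=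
  {h | wordDist S g h ≤ n}


/-!
Both `a_M` and `a_K` lie in a ball of radius `R`, so their word distance is at most `2R`, while
`|a_K| ≤ |a_M| + d(a_M, a_K)`. Rapid growth makes `|a_n|` nondecreasing for `n ≥ 1`, so
`|a_M| ≤ |a_{K-1}|`, and `|a_K| ≥ (K - 1)|a_{K-1}|`; hence `(K - 2)|a_{K-1}| ≤ 2R`.
-/

namespace WordMetric

variable {G : Type*} [Group G] {S : Set G}

theorem wordLength_prod_le_length {L : List G} (hL : ∀ x ∈ L, x ∈ S) :
    wordLength S L.prod ≤ L.length :=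
  Nat.sInf_le ⟨L.get, fun i => hL _ (L.get_mem i), by rw [List.ofFn_get]⟩

theorem exists_list_length_eq_wordLength (hsymm : ∀ s ∈ S, s⁻¹ ∈ S)
    (hgen : Subgroup.closure S = ⊤) (g : G) :
    ∃ L : List G, (∀ x ∈ L, x ∈ S) ∧ L.prod = g ∧ L.length = wordLength S g := by
  have hmem : g ∈ Submonoid.closure S := by
    have : S ∪ S⁻¹ = S := Set.union_eq_left.2 fun s hs => by simpa using hsymm _ hs
    rw [← this, ← Subgroup.closure_toSubmonoid, hgen]
    trivial
  obtain ⟨L, hL, rfl⟩ := Submonoid.exists_list_of_mem_closure hmem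
  obtain ⟨f, hf, hprod⟩ := Nat.sInf_mem (s := {n | ∃ f : Fin n → G, (∀ i, f i ∈ S) ∧
    (List.ofFn f).prod = L.prod}) ⟨L.length, L.get, fun i => hL _ (L.get_mem i), by simp⟩
  exact ⟨List.ofFn f, by simpa [List.mem_ofFn] using hf, hprod, List.length_ofFn⟩

section Symmetric

variable (hsymm : ∀ s ∈ S, s⁻¹ ∈ S) (hgen : Subgroup.closure S = ⊤)
include hsymm hgen

theorem wordLength_mul_le (x y : G) :
    wordLength S (x * y) ≤ wordLength S x + wordLength S y := by
  obtain ⟨L₁, h₁, rfl, hl₁⟩ := exists_list_length_eq_wordLength hsymm hgen x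
  obtain ⟨L₂, h₂, rfl, hl₂⟩ := exists_list_length_eq_wordLength hsymm hgen y
  rw [← hl₁, ← hl₂, ← List.length_append, ← List.prod_append]
  exact wordLength_prod_le_length fun z hz => (List.mem_append.1 hz).elim (h₁ z) (h₂ z)

theorem wordLength_inv_le (x : G) : wordLength S x⁻¹ ≤ wordLength S x := by
  obtain ⟨L, hL, rfl, hl⟩ := exists_list_length_eq_wordLength hsymm hgen x
  rw [← hl, List.prod_inv_reverse, ← List.length_map (f := Inv.inv), ← List.length_reverse]
  refine wordLength_prod_le_length fun z hz => ?_
  obtain ⟨w, hw, rfl⟩ := List.mem_map.1 (List.mem_reverse.1 hz)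
  exact hsymm w (hL w hw)

theorem wordDist_comm (x y : G) : wordDist S x y = wordDist S y x :=
  le_antisymm (by simpa [wordDist] using wordLength_inv_le hsymm hgen (y⁻¹ * x))
    (by simpa [wordDist] using wordLength_inv_le hsymm hgen (x⁻¹ * y))

theorem wordDist_triangle (x y z : G) : wordDist S x z ≤ wordDist S x y + wordDist S y z := by
  simpa [wordDist, mul_assoc] using wordLength_mul_le hsymm hgen (x⁻¹ * y) (y⁻¹ * z)

theorem wordLength_le_add_wordDist (x y : G) :
    wordLength S y ≤ wordLength S x + wordDist S x y := by
  simpa [wordDist] using wordLength_mul_le hsymm hgen x (x⁻¹ * y)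

theorem wordDist_le_of_mem_wordBall {g x y : G} {R : ℕ} (hx : x ∈ wordBall S g R)
    (hy : y ∈ wordBall S g R) : wordDist S x y ≤ 2 * R := by
  have := wordDist_triangle hsymm hgen x g y
  rw [wordDist_comm hsymm hgen x g] at this
  simp only [wordBall, Set.mem_ofPred_eq] at hx hy
  omega

end Symmetric

end WordMetric

section RapidGrowth

variable {ℓ : ℕ → ℕ} (hgrow : ∀ n, 1 ≤ n → n * ℓ n ≤ ℓ (n + 1))
include hgrow

theorem monotoneOn_Ici_one_of_mul_le_succ : MonotoneOn ℓ (Set.Ici 1) :=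
  monotoneOn_of_le_add_one Set.ordConnected_Ici fun n _ hn _ =>
    (Nat.le_mul_of_pos_left _ hn).trans (hgrow n hn)

theorem sub_two_mul_add_le_of_mul_le_succ {M K : ℕ} (hM : 1 ≤ M) (hMK : M < K) :
    (K - 2) * ℓ (K - 1) + ℓ M ≤ ℓ K := by
  obtain ⟨k, rfl⟩ : ∃ k, K = k + 2 := ⟨K - 2, by omega⟩
  have hstep : (k + 1) * ℓ (k + 1) ≤ ℓ (k + 2) := hgrow (k + 1) (by omega)
  have hmono : ℓ M ≤ ℓ (k + 1) :=
    monotoneOn_Ici_one_of_mul_le_succ hgrow hM (Set.mem_Ici.2 (by omega)) (by omega)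
  simp only [Nat.add_sub_cancel, show k + 2 - 1 = k + 1 by omega]
  nlinarith

end RapidGrowth

theorem div_le_two_div_of_mul_le_two_mul {x r c : ℝ} (hr : 0 ≤ r) (hc : 0 < c)
    (h : c * x ≤ 2 * r) : x / r ≤ 2 / c := by
  rcases hr.eq_or_lt with rfl | hr
  · rw [div_zero]
    positivity
  rw [div_le_div_iff₀ hr hc]
  linarith

theorem rapidly_spreading_in_ball_general {G : Type*} [Group G] (S : Set G)
    (hsymm : ∀ s ∈ S, s⁻¹ ∈ S)
    (hgen : Subgroup.closure S = ⊤)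
    (a : ℕ → G)
    (hgrow : ∀ n : ℕ, 1 ≤ n → n * wordLength S (a n) ≤ wordLength S (a (n + 1)))
    (g : G) (R : ℕ) (M K : ℕ) (hMK : M < K) (hM : 1 ≤ M) (hK : 3 ≤ K)
    (haM : a M ∈ wordBall S g R) (haK : a K ∈ wordBall S g R) :
    (wordLength S (a (K - 1)) : ℝ) / (R : ℝ) ≤ 2 / ((K : ℝ) - 2) := by
  have hgap := sub_two_mul_add_le_of_mul_le_succ hgrow hM hMK
  have hjump := WordMetric.wordLength_le_add_wordDist hsymm hgen (a M) (a K)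
  have hdist := WordMetric.wordDist_le_of_mem_wordBall hsymm hgen haM haK
  have hkey : (K - 2) * wordLength S (a (K - 1)) ≤ 2 * R := by omega
  have hK' : ((K - 2 : ℕ) : ℝ) = (K : ℝ) - 2 := by push_cast [show 2 ≤ K by omega]; ring
  refine div_le_two_div_of_mul_le_two_mul R.cast_nonneg ?_ ?_
  · rw [← hK']
    exact_mod_cast Nat.sub_pos_of_lt (by omega)
  · rw [← hK']
    exact_mod_cast hkey

/-- If `a_M, a_K ∈ B(g,R)` with `M < K`, `K ≥ 3`, for a rapidly spreading
sequence, then `|a_{K-1}|/R ≤ 2/(K-2)`. -/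
theorem rapidly_spreading_in_ball {G : Type*} [Group G] (S : Set G)
    (hfin : S.Finite) (hone : (1 : G) ∈ S) (hsymm : ∀ s ∈ S, s⁻¹ ∈ S)
    (hgen : Subgroup.closure S = ⊤)
    (a : ℕ → G) (ha1 : a 1 ≠ 1)
    (hgrow : ∀ n : ℕ, 1 ≤ n → n * wordLength S (a n) ≤ wordLength S (a (n + 1)))
    (g : G) (R : ℕ) (M K : ℕ) (hMK : M < K) (hM : 1 ≤ M) (hK : 3 ≤ K)
    (haM : a M ∈ wordBall S g R) (haK : a K ∈ wordBall S g R) :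
    (wordLength S (a (K - 1)) : ℝ) / (R : ℝ) ≤ 2 / ((K : ℝ) - 2) :=
  rapidly_spreading_in_ball_general S hsymm hgen a hgrow g R M K hMK hM hK haM haK
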